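/- Suppose (f, E, A) is ε-almost affine with ε ≤ a, and x, y ∈ E, r, s > 0, a ≥ 1 satisfy |x−y| ≤ a·max(r,s), τ(x,r,y,s) ≤ a, and dist(z, {x,y}) ≤ a·max(r,s) for some z ∈ ℝⁿ. Then |A_{x,r}(z) − A_{y,s}(z)| ≤ C(a)·ε·min(‖A'_{x,r}‖, ‖A'_{y,s}‖)·max(r,s) for a constant C(a) depending only on a. -/

import Mathlib

/-
Put `R = a * min r s`; the bound on `τ` gives `r, s, |x - y| ≤ R ≤ 2ᵏ min r s` once `a < 2ᵏ`.
Compatibility says that the linear parts at `(x, ρ)` and `(x, ρ/2)`, and at `(x, R)` and `(y, R)`,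
agree up to relative error `ε`. Chaining the `2k + 1` steps `(x, r) → (x, R) → (y, R) → (y, s)`,
relative errors compose multiplicatively, so all linear parts involved agree with
`min ‖A'_{x,r}‖ ‖A'_{y,s}‖` up to the relative error `(1 + ε)^(2k+1) - 1 = O(ε)` (as `ε ≤ a`).
Values are compared at `x` and `y`, which lie in `E` and in the balls concerned, so that both maps
are within `O(ε ‖A'‖ R)` of `f` there; moving from `x` or `y` to `z` costs the norm of the
difference of the linear parts times `|z - x|` or `|z - y|`, both `O(a max r s)`.
-/

open Metric

/-- An `ε`-compatible family of affine maps over `E ⊆ ℝⁿ`. -/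
def IsCompatibleFamily (n N : ℕ) (E : Set (EuclideanSpace ℝ (Fin n)))
    (A : EuclideanSpace ℝ (Fin n) → ℝ →
      ContinuousAffineMap ℝ (EuclideanSpace ℝ (Fin n)) (EuclideanSpace ℝ (Fin N)))
    (ε : ℝ) : Prop :=
  ∀ x ∈ E, ∀ y ∈ E, ∀ r s : ℝ, 0 < r → 0 < s →
    dist x y ≤ max r s → 1 / 2 ≤ r / s → r / s ≤ 2 →
    ‖(A x r).contLinear - (A y s).contLinear‖ ≤
      ε * min ‖(A x r).contLinear‖ ‖(A y s).contLinear‖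

/-- `(f, E, A)` is `ε`-almost affine. -/
def IsAlmostAffine (n N : ℕ) (f : EuclideanSpace ℝ (Fin n) → EuclideanSpace ℝ (Fin N))
    (E : Set (EuclideanSpace ℝ (Fin n)))
    (A : EuclideanSpace ℝ (Fin n) → ℝ →
      ContinuousAffineMap ℝ (EuclideanSpace ℝ (Fin n)) (EuclideanSpace ℝ (Fin N)))
    (ε : ℝ) : Prop :=
  IsCompatibleFamily n N E A ε ∧
  ∀ x ∈ E, ∀ r : ℝ, 0 < r → ∀ z ∈ E ∩ closedBall x r,
    dist (f z) ((A x r) z) ≤ ε * ‖(A x r).contLinear‖ * r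

open Finset

section RelClose

variable {F : Type*} [SeminormedAddCommGroup F]

/-- Relative closeness, parametrized by the factor `c` rather than the relative error `c - 1`
so that chaining multiplies factors. -/
def RelClose (c : ℝ) (u v : F) : Prop :=
  ‖u - v‖ ≤ (c - 1) * min ‖u‖ ‖v‖

variable {c c₁ c₂ : ℝ} {u v w : F}

theorem relClose_self (hc : 1 ≤ c) (u : F) : RelClose c u u := by
  rw [RelClose, sub_self, norm_zero]
  exact mul_nonneg (by linarith) (le_min (norm_nonneg _) (norm_nonneg _))

theorem RelClose.symm (h : RelClose c u v) : RelClose c v u := by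
  rwa [RelClose, norm_sub_rev, min_comm]

theorem RelClose.mono (h : RelClose c₁ u v) (hc : c₁ ≤ c₂) : RelClose c₂ u v :=
  h.trans (mul_le_mul_of_nonneg_right (by linarith) (le_min (norm_nonneg _) (norm_nonneg _)))

theorem RelClose.norm_sub_le (h : RelClose c u v) (hc : 1 ≤ c) : ‖u - v‖ ≤ (c - 1) * ‖v‖ :=
  h.trans (mul_le_mul_of_nonneg_left (min_le_right _ _) (by linarith))

theorem RelClose.norm_le (h : RelClose c u v) (hc : 1 ≤ c) : ‖u‖ ≤ c * ‖v‖ := by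
  have := norm_le_norm_add_norm_sub' u v
  linarith [h.norm_sub_le hc]

theorem RelClose.trans (h₁ : RelClose c₁ u v) (h₂ : RelClose c₂ v w) (hc₁ : 1 ≤ c₁)
    (hc₂ : 1 ≤ c₂) : RelClose (c₁ * c₂) u w := by
  have huw := norm_sub_le_norm_sub_add_norm_sub u v w
  refine huw.trans (le_min_iff.2 ⟨?_, ?_⟩ |>.trans_eq (mul_min_of_nonneg _ _ ?_).symm)
  · have := h₁.symm.norm_le hc₁
    have := h₁.symm.norm_sub_le hc₁
    have := h₂.symm.norm_sub_le hc₂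
    rw [norm_sub_rev u v, norm_sub_rev v w] at *
    nlinarith
  · have := h₂.norm_le hc₂
    have := h₁.norm_sub_le hc₁
    have := h₂.norm_sub_le hc₂
    nlinarith
  · nlinarith

end RelClose

theorem one_add_pow_sub_one_le {ε a : ℝ} (hε : 0 ≤ ε) (hεa : ε ≤ a) (n : ℕ) :
    (1 + ε) ^ n - 1 ≤ ε * ∑ i ∈ range n, (1 + a) ^ i := by
  calc (1 + ε) ^ n - 1 = ε * ∑ i ∈ range n, (1 + ε) ^ i := by
        rw [← geom_sum_mul, mul_comm]; ring
    _ ≤ ε * ∑ i ∈ range n, (1 + a) ^ i := by gcongr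

theorem dist_add_dist_le_of_infDist_pair_le {α : Type*} [PseudoMetricSpace α] {x y z : α}
    {ρ : ℝ} (hz : infDist z {x, y} ≤ ρ) : dist z x + dist z y ≤ 2 * ρ + dist x y := by
  obtain ⟨w, hw, hzw⟩ := (Set.toFinite {x, y}).isCompact.exists_infDist_eq_dist
    (Set.insert_nonempty x {y}) z
  rcases hw with rfl | rfl
  · linarith [dist_triangle z w y]
  · linarith [dist_triangle z w x, dist_comm x w]

theorem ContinuousAffineMap.dist_apply_le_dist_apply_add {𝕜 V W : Type*} [NontriviallyNormedField 𝕜]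
    [NormedAddCommGroup V] [NormedSpace 𝕜 V] [NormedAddCommGroup W] [NormedSpace 𝕜 W]
    (T₁ T₂ : V →ᴬ[𝕜] W) (x z : V) :
    dist (T₁ z) (T₂ z) ≤ dist (T₁ x) (T₂ x) + ‖T₁.contLinear - T₂.contLinear‖ * dist z x := by
  have hdiff : T₁ z - T₂ z = (T₁ - T₂) x + (T₁.contLinear - T₂.contLinear) (z - x) := by
    rw [← sub_contLinear, ← vsub_eq_sub z x, contLinear_map_vsub, vsub_eq_sub]
    simp only [coe_sub, Pi.sub_apply]
    abel
  rw [dist_eq_norm, hdiff, dist_eq_norm, dist_eq_norm]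
  exact (norm_add_le _ _).trans (add_le_add le_rfl (ContinuousLinearMap.le_opNorm _ _))

variable {n N : ℕ} {E : Set (EuclideanSpace ℝ (Fin n))}
  {A : EuclideanSpace ℝ (Fin n) → ℝ →
    ContinuousAffineMap ℝ (EuclideanSpace ℝ (Fin n)) (EuclideanSpace ℝ (Fin N))}
  {ε r s R : ℝ} {x y : EuclideanSpace ℝ (Fin n)}

namespace IsCompatibleFamily

theorem relClose (h : IsCompatibleFamily n N E A ε) (hx : x ∈ E) (hy : y ∈ E) (hr : 0 < r)
    (hs : 0 < s) (hxy : dist x y ≤ max r s) (h₁ : 1 / 2 ≤ r / s) (h₂ : r / s ≤ 2) :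
    RelClose (1 + ε) (A x r).contLinear (A y s).contLinear := by
  rw [RelClose, add_sub_cancel_left]
  exact h x hx y hy r s hr hs hxy h₁ h₂

theorem relClose_of_le_two_pow_mul (h : IsCompatibleFamily n N E A ε) (hε : 0 ≤ ε) (hx : x ∈ E)
    (hs : 0 < s) {k : ℕ} (hsr : s ≤ r) (hrs : r ≤ 2 ^ k * s) :
    RelClose ((1 + ε) ^ k) (A x r).contLinear (A x s).contLinear := by
  induction k generalizing r with
  | zero =>
    obtain rfl : r = s := le_antisymm (by simpa using hrs) hsr
    exact relClose_self (by simp) _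
  | succ k ih =>
    have hr : 0 < r := hs.trans_le hsr
    have hstep : ∀ {t}, 0 < t → t ≤ r → r ≤ 2 * t →
        RelClose (1 + ε) (A x r).contLinear (A x t).contLinear := fun ht htr hrt =>
      h.relClose hx hx hr ht (by simp [hr.le])
        (by rw [le_div_iff₀ ht]; linarith) (by rw [div_le_iff₀ ht]; linarith)
    have hpow : 1 ≤ (1 + ε) ^ k := one_le_pow₀ (by linarith)
    rcases le_or_gt r (2 * s) with hr2 | hr2
    · exact (hstep hs hsr hr2).mono (by rw [pow_succ']; nlinarith)
    · have ih' := ih (r := r / 2) (by linarith) (by rw [pow_succ] at hrs; linarith)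
      rw [pow_succ']
      exact (hstep (by linarith) (by linarith) (by linarith)).trans ih' (by linarith) hpow

theorem relClose_of_le_scale (h : IsCompatibleFamily n N E A ε) (hε : 0 ≤ ε) (hx : x ∈ E)
    (hy : y ∈ E) (hr : 0 < r) (hs : 0 < s) {k : ℕ} (hrR : r ≤ R) (hRr : R ≤ 2 ^ k * r)
    (hsR : s ≤ R) (hRs : R ≤ 2 ^ k * s) (hxy : dist x y ≤ R) :
    RelClose ((1 + ε) ^ (2 * k + 1)) (A x r).contLinear (A y s).contLinear := by
  have hR : 0 < R := hr.trans_le hrR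
  have hpow : 1 ≤ (1 + ε) ^ k := one_le_pow₀ (by linarith)
  have hx' := (h.relClose_of_le_two_pow_mul hε hx hr hrR hRr).symm
  have hxy' := h.relClose hx hy hR hR (by rwa [max_self]) (by norm_num [hR.ne'])
    (by norm_num [hR.ne'])
  have hy' := h.relClose_of_le_two_pow_mul hε hy hs hsR hRs
  convert (hx'.trans hxy' hpow (by linarith)).trans hy' (by nlinarith) hpow using 1
  ring

end IsCompatibleFamily

namespace IsAlmostAffine

variable {f : EuclideanSpace ℝ (Fin n) → EuclideanSpace ℝ (Fin N)}

theorem dist_apply_le (h : IsAlmostAffine n N f E A ε) (hε : 0 ≤ ε) (hx : x ∈ E) (hy : y ∈ E)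
    (hr : 0 < r) (hs : 0 < s) (hxy : dist x y ≤ s) {c K : ℝ}
    (hc : RelClose c (A x r).contLinear (A y s).contLinear) (hc₁ : 1 ≤ c)
    (hKx : ‖(A x r).contLinear‖ ≤ K) (hKy : ‖(A y s).contLinear‖ ≤ K)
    (z : EuclideanSpace ℝ (Fin n)) :
    dist (A x r z) (A y s z) ≤ K * (ε * (r + s) + (c - 1) * dist z x) := by
  have hfx : dist (f x) (A x r x) ≤ ε * ‖(A x r).contLinear‖ * r :=
    h.2 x hx r hr x ⟨hx, mem_closedBall_self hr.le⟩
  have hfy : dist (f x) (A y s x) ≤ ε * ‖(A y s).contLinear‖ * s :=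
    h.2 y hy s hs x ⟨hx, mem_closedBall.2 hxy⟩
  have hL : ‖(A x r).contLinear - (A y s).contLinear‖ ≤ (c - 1) * K :=
    (hc.norm_sub_le hc₁).trans (mul_le_mul_of_nonneg_left hKy (by linarith))
  have hKr : ε * ‖(A x r).contLinear‖ * r ≤ ε * K * r := by gcongr
  have hKs : ε * ‖(A y s).contLinear‖ * s ≤ ε * K * s := by gcongr
  calc dist (A x r z) (A y s z)
      ≤ dist (A x r x) (A y s x) + ‖(A x r).contLinear - (A y s).contLinear‖ * dist z x :=
        ContinuousAffineMap.dist_apply_le_dist_apply_add _ _ x z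
    _ ≤ (ε * ‖(A x r).contLinear‖ * r + ε * ‖(A y s).contLinear‖ * s)
          + (c - 1) * K * dist z x :=
        add_le_add ((dist_triangle_left _ _ (f x)).trans (add_le_add hfx hfy))
          (mul_le_mul_of_nonneg_right hL dist_nonneg)
    _ ≤ K * (ε * (r + s) + (c - 1) * dist z x) := by linarith

theorem dist_apply_le_of_le_scale (h : IsAlmostAffine n N f E A ε) (hε : 0 ≤ ε) (hx : x ∈ E)
    (hy : y ∈ E) (hr : 0 < r) (hs : 0 < s) {k : ℕ} (hrR : r ≤ R) (hRr : R ≤ 2 ^ k * r)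
    (hsR : s ≤ R) (hRs : R ≤ 2 ^ k * s) (hxy : dist x y ≤ R) (z : EuclideanSpace ℝ (Fin n)) :
    dist (A x r z) (A y s z) ≤
      (1 + ε) ^ (2 * k + 1) * min ‖(A x r).contLinear‖ ‖(A y s).contLinear‖ *
        (ε * (r + 2 * R + s) + ((1 + ε) ^ (2 * k + 1) - 1) * (dist z x + dist z y)) := by
  set c := (1 + ε) ^ (2 * k + 1)
  have hc : 1 ≤ c := one_le_pow₀ (by linarith)
  have hR : 0 < R := hr.trans_le hrR
  have hRR : R ≤ 2 ^ k * R := le_mul_of_one_le_left hR.le (one_le_pow₀ one_le_two)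
  have hxs := h.1.relClose_of_le_scale hε hx hy hr hs hrR hRr hsR hRs hxy
  have hxR := h.1.relClose_of_le_scale hε hx hy hr hR hrR hRr le_rfl hRR hxy
  have hRs' := h.1.relClose_of_le_scale hε hy hy hR hs le_rfl hRR hsR hRs (by simpa using hR.le)
  have hK : ∀ L : EuclideanSpace ℝ (Fin n) →L[ℝ] EuclideanSpace ℝ (Fin N),
      ‖L‖ ≤ c * ‖(A x r).contLinear‖ → ‖L‖ ≤ c * ‖(A y s).contLinear‖ →
      ‖L‖ ≤ c * min ‖(A x r).contLinear‖ ‖(A y s).contLinear‖ := fun L h₁ h₂ => by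
    rw [mul_min_of_nonneg _ _ (by linarith)]
    exact le_min h₁ h₂
  have hKxr := hK _ (le_mul_of_one_le_left (norm_nonneg _) hc) (hxs.norm_le hc)
  have hKyR := hK _ (hxR.symm.norm_le hc) (hRs'.norm_le hc)
  have hKys := hK _ (hxs.symm.norm_le hc) (le_mul_of_one_le_left (norm_nonneg _) hc)
  calc dist (A x r z) (A y s z) ≤ dist (A x r z) (A y R z) + dist (A y R z) (A y s z) :=
        dist_triangle _ _ _
    _ ≤ _ := add_le_add (h.dist_apply_le hε hx hy hr hR hxy hxR hc hKxr hKyR z)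
        (h.dist_apply_le hε hy hy hR hs (by simpa using hs.le) hRs' hc hKyR hKys z)
    _ = _ := by ring

end IsAlmostAffine

/-- For every `a ≥ 1` there is a constant `C = C(a)` such that: whenever
`(f,E,A)` is `ε`-almost affine with `ε ≤ a`, `x, y ∈ E`, `r, s > 0` satisfy
`|x−y| ≤ a·max(r,s)` and `τ(x,r,y,s) = max(r,s,2|x−y|)/min(r,s) ≤ a`, and `z ∈ ℝⁿ` satisfies
`dist(z,{x,y}) ≤ a·max(r,s)`, then
`|A_{x,r} z − A_{y,s} z| ≤ C·ε·min(‖A'_{x,r}‖,‖A'_{y,s}‖)·max(r,s)`. -/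
theorem almostAffine_pointwise_comparison (a : ℝ) (ha : 1 ≤ a) :
    ∃ C : ℝ, 0 < C ∧
      ∀ (n N : ℕ) (f : EuclideanSpace ℝ (Fin n) → EuclideanSpace ℝ (Fin N))
        (E : Set (EuclideanSpace ℝ (Fin n)))
        (A : EuclideanSpace ℝ (Fin n) → ℝ →
          ContinuousAffineMap ℝ (EuclideanSpace ℝ (Fin n)) (EuclideanSpace ℝ (Fin N)))
        (ε : ℝ), 0 < ε → ε ≤ a → IsAlmostAffine n N f E A ε →
        ∀ x ∈ E, ∀ y ∈ E, ∀ r s : ℝ, 0 < r → 0 < s →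
          dist x y ≤ a * max r s →
          max (max r s) (2 * dist x y) / min r s ≤ a →
          ∀ z : EuclideanSpace ℝ (Fin n),
            Metric.infDist z {x, y} ≤ a * max r s →
            dist ((A x r) z) ((A y s) z) ≤
              C * ε * min ‖(A x r).contLinear‖ ‖(A y s).contLinear‖ * max r s := by
  obtain ⟨k, hk⟩ := pow_unbounded_of_one_lt a one_lt_two
  set G := ∑ i ∈ range (2 * k + 1), (1 + a) ^ i
  refine ⟨a * (1 + a) ^ (2 * k + 1) * (4 + 3 * G), by positivity, ?_⟩
  intro n N f E A ε hε hεa h x hx y hy r s hr hs hxy hτ z hz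
  set R := a * min r s
  have hτR : max (max r s) (2 * dist x y) ≤ R := (div_le_iff₀ (lt_min hr hs)).1 hτ
  have hrR : r ≤ R := (le_max_left r s).trans (le_max_left _ _) |>.trans hτR
  have hsR : s ≤ R := (le_max_right r s).trans (le_max_left _ _) |>.trans hτR
  have hxyR : dist x y ≤ R := by linarith [le_max_right (max r s) (2 * dist x y)]
  have hRr : R ≤ 2 ^ k * r := mul_le_mul hk.le (min_le_left _ _) (by positivity) (by positivity)
  have hRs : R ≤ 2 ^ k * s := mul_le_mul hk.le (min_le_right _ _) (by positivity) (by positivity)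
  have hRM : R ≤ a * max r s := mul_le_mul_of_nonneg_left min_le_max (by linarith)
  have hzxy := dist_add_dist_le_of_infDist_pair_le hz
  have hc : 1 ≤ (1 + ε) ^ (2 * k + 1) := one_le_pow₀ (by linarith)
  calc dist (A x r z) (A y s z) ≤ _ :=
        h.dist_apply_le_of_le_scale hε.le hx hy hr hs hrR hRr hsR hRs hxyR z
    _ ≤ (1 + a) ^ (2 * k + 1) * min ‖(A x r).contLinear‖ ‖(A y s).contLinear‖ *
          (ε * (4 * (a * max r s)) + ε * G * (3 * (a * max r s))) := by
        gcongr ?_ * _ * (_ * ?_ + ?_ * ?_)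
        · exact pow_le_pow_left₀ (by positivity) (by linarith) _
        · linarith
        · exact one_add_pow_sub_one_le hε.le hεa _
        · linarith
    _ = _ := by ring
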